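/- arXiv:2308.03049 — 6 statements merged into one kernel-verified Lean document; each statement's English description precedes it below -/
import Mathlib

section
/- Let ‖·‖ be a norm on ℝ², let v ∈ ℝ² \ ℚ², and let (q_n, p_n)_{n≥0} ⊆ ℕ × ℤ² be a sequence such that: q₀ = 1; q_n < q_{n+1} for all n; ‖q_n v − p_n‖ < ‖q_{n−1} v − p_{n−1}‖ for all n ≥ 1; and int Π_n(v) ∩ ℤ³ = ∅ for all n ≥ 1, where Π_n(v) := {(α, y) ∈ ℝ × ℝ² : 0 ≤ α ≤ q_n and ‖α v − y‖ ≤ ‖q_{n−1} v − p_{n−1}‖} and int denotes the interior in ℝ³. Then (q_n, p_n)_{n≥0} is the best approximation sequence of v with respect to ‖·‖. -/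
open Real Filter

noncomputable section

open Real Filter

noncomputable section

/-- `N` is a norm on `ℝ × ℝ`. -/
def IsNorm2 (N : ℝ × ℝ → ℝ) : Prop :=
  (∀ u, 0 ≤ N u) ∧ (∀ u, N u = 0 ↔ u = 0) ∧
  (∀ (r : ℝ) (u : ℝ × ℝ), N (r • u) = |r| * N u) ∧
  (∀ u w : ℝ × ℝ, N (u + w) ≤ N u + N w)

/-- distance (w.r.t. `N`) from a point of `ℝ²` to the integer lattice `ℤ²`. -/
def latDist (N : ℝ × ℝ → ℝ) (w : ℝ × ℝ) : ℝ :=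
  sInf {r : ℝ | ∃ p : ℤ × ℤ, r = N (w - ((p.1 : ℝ), (p.2 : ℝ)))}

/-- `w` is the best approximation sequence of `v` with respect to `N`. -/
def IsBestApproxSeq (N : ℝ × ℝ → ℝ) (v : ℝ × ℝ) (w : ℕ → ℕ × (ℤ × ℤ)) : Prop :=
  (w 0).1 = 1 ∧
  (∀ n : ℕ, 1 ≤ n →
    IsLeast {q : ℕ | 1 ≤ q ∧
      latDist N ((q : ℝ) • v) < latDist N (((w (n - 1)).1 : ℝ) • v)} (w n).1) ∧
  (∀ n : ℕ,
    N (((w n).1 : ℝ) • v - (((w n).2.1 : ℝ), ((w n).2.2 : ℝ))) =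
      latDist N (((w n).1 : ℝ) • v))

/-- the `n`-th long displacement vector `β_n(v) = √(q_{n+1}) (q_n v - p_n)`. -/
def betaVec (w : ℕ → ℕ × (ℤ × ℤ)) (v : ℝ × ℝ) (n : ℕ) : ℝ × ℝ :=
  Real.sqrt ((w (n + 1)).1) •
    (((w n).1 : ℝ) • v - (((w n).2.1 : ℝ), ((w n).2.2 : ℝ)))

/-- `v ∈ ℝ² \ ℚ²`. -/
def NotRat2 (v : ℝ × ℝ) : Prop := ¬ ∃ p : ℚ × ℚ, v = ((p.1 : ℝ), (p.2 : ℝ))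

/-!
If some `(q, p) ∈ ℤ³` with `0 < q < q_n` satisfied `N (q v - p) < N (q_{n-1} v - p_{n-1})`, then,
by continuity of the norm, a whole neighbourhood of it would lie in `Π_n(v)`, so it would be an
integer point of the interior. Hence no denominator below `q_n` beats the error of `q_{n-1}`.
Applied at `q = q_n < q_{n+1}` this says that `p_n` is a nearest lattice point to `q_n v`, and
applied to an arbitrary `q` it says that `q_n` is the first denominator improving on `q_{n-1}`.
-/

variable {N : ℝ × ℝ → ℝ}

def IsNorm2.toSeminorm (hN : IsNorm2 N) : Seminorm ℝ (ℝ × ℝ) :=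
  Seminorm.of N hN.2.2.2 fun r u => by rw [hN.2.2.1, Real.norm_eq_abs]

theorem IsNorm2.continuous (hN : IsNorm2 N) : Continuous N :=
  continuousOn_univ.mp (hN.toSeminorm.convexOn.continuousOn isOpen_univ)

theorem latDist_eq_of_forall_le {x : ℝ × ℝ} {p₀ : ℤ × ℤ}
    (h : ∀ p : ℤ × ℤ, N (x - ((p₀.1 : ℝ), (p₀.2 : ℝ))) ≤ N (x - ((p.1 : ℝ), (p.2 : ℝ)))) :
    latDist N x = N (x - ((p₀.1 : ℝ), (p₀.2 : ℝ))) :=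
  IsLeast.csInf_eq ⟨⟨p₀, rfl⟩, by rintro _ ⟨p, rfl⟩; exact h p⟩

theorem exists_lt_of_latDist_lt {x : ℝ × ℝ} {c : ℝ} (h : latDist N x < c) :
    ∃ p : ℤ × ℤ, N (x - ((p.1 : ℝ), (p.2 : ℝ))) < c := by
  obtain ⟨_, ⟨p, rfl⟩, hp⟩ := exists_lt_of_csInf_lt (by exact ⟨_, (0, 0), rfl⟩) h
  exact ⟨p, hp⟩

theorem le_of_interior_inter_lattice_eq_empty (hN : Continuous N) {v : ℝ × ℝ} {Q c : ℝ}
    (hempty : interior {x : ℝ × ℝ × ℝ | 0 ≤ x.1 ∧ x.1 ≤ Q ∧ N (x.1 • v - x.2) ≤ c} ∩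
        {x : ℝ × ℝ × ℝ | ∃ z : ℤ × ℤ × ℤ, x = ((z.1 : ℝ), (z.2.1 : ℝ), (z.2.2 : ℝ))} = ∅)
    {q : ℕ} (hq : 0 < q) (hqQ : (q : ℝ) < Q) (p : ℤ × ℤ) :
    c ≤ N ((q : ℝ) • v - ((p.1 : ℝ), (p.2 : ℝ))) := by
  by_contra! hlt
  set x₀ : ℝ × ℝ × ℝ := ((q : ℝ), ((p.1 : ℝ), (p.2 : ℝ)))
  have hdist : Continuous fun x : ℝ × ℝ × ℝ => N (x.1 • v - x.2) := by fun_prop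
  have hinterior : x₀ ∈ interior
      {x : ℝ × ℝ × ℝ | 0 ≤ x.1 ∧ x.1 ≤ Q ∧ N (x.1 • v - x.2) ≤ c} := by
    rw [mem_interior_iff_mem_nhds]
    filter_upwards [continuousAt_const.eventually_lt continuous_fst.continuousAt
        (Nat.cast_pos.mpr hq), continuous_fst.continuousAt.eventually_lt continuousAt_const hqQ,
      hdist.continuousAt.eventually_lt continuousAt_const hlt] with x h₁ h₂ h₃
    exact ⟨h₁.le, h₂.le, h₃.le⟩
  have hlattice : x₀ ∈ {x : ℝ × ℝ × ℝ | ∃ z : ℤ × ℤ × ℤ,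
      x = ((z.1 : ℝ), (z.2.1 : ℝ), (z.2.2 : ℝ))} := ⟨((q : ℤ), p), by simp [x₀]⟩
  exact hempty.subset ⟨hinterior, hlattice⟩

theorem statement6_general
    (N : ℝ × ℝ → ℝ) (hN : IsNorm2 N)
    (v : ℝ × ℝ)
    (w : ℕ → ℕ × (ℤ × ℤ))
    (h0 : (w 0).1 = 1)
    (hmono : ∀ n : ℕ, (w n).1 < (w (n + 1)).1)
    (hdec : ∀ n : ℕ, 1 ≤ n →
      N (((w n).1 : ℝ) • v - (((w n).2.1 : ℝ), ((w n).2.2 : ℝ))) <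
        N (((w (n - 1)).1 : ℝ) • v -
          (((w (n - 1)).2.1 : ℝ), ((w (n - 1)).2.2 : ℝ))))
    (hempty : ∀ n : ℕ, 1 ≤ n →
      interior {x : ℝ × ℝ × ℝ | 0 ≤ x.1 ∧ x.1 ≤ ((w n).1 : ℝ) ∧
          N (x.1 • v - x.2) ≤
            N (((w (n - 1)).1 : ℝ) • v -
              (((w (n - 1)).2.1 : ℝ), ((w (n - 1)).2.2 : ℝ)))} ∩
        {x : ℝ × ℝ × ℝ | ∃ z : ℤ × ℤ × ℤ,
          x = ((z.1 : ℝ), (z.2.1 : ℝ), (z.2.2 : ℝ))} = ∅) :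
    IsBestApproxSeq N v w := by
  have no_better : ∀ n, 1 ≤ n → ∀ q : ℕ, 0 < q → q < (w n).1 → ∀ p : ℤ × ℤ,
      N (((w (n - 1)).1 : ℝ) • v - (((w (n - 1)).2.1 : ℝ), ((w (n - 1)).2.2 : ℝ))) ≤
        N ((q : ℝ) • v - ((p.1 : ℝ), (p.2 : ℝ))) := fun n hn q hq hqn =>
    le_of_interior_inter_lattice_eq_empty hN.continuous (hempty n hn) hq (by exact_mod_cast hqn)
  have hpos : ∀ n, 1 ≤ (w n).1 := fun n =>
    h0 ▸ (strictMono_nat_of_lt_succ hmono).monotone n.zero_le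
  have hnearest : ∀ n, N (((w n).1 : ℝ) • v - (((w n).2.1 : ℝ), ((w n).2.2 : ℝ))) =
      latDist N (((w n).1 : ℝ) • v) := fun n =>
    (latDist_eq_of_forall_le (no_better (n + 1) (Nat.le_add_left 1 n) _ (hpos n) (hmono n))).symm
  refine ⟨h0, fun n hn => ⟨⟨hpos n, ?_⟩, ?_⟩, hnearest⟩
  · rw [← hnearest, ← hnearest]
    exact hdec n hn
  · rintro q ⟨hq, hlt⟩
    by_contra! hqn
    obtain ⟨p, hp⟩ := exists_lt_of_latDist_lt (hlt.trans_eq (hnearest (n - 1)).symm)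
    exact (no_better n hn q hq hqn p).not_gt hp

theorem statement6
    (N : ℝ × ℝ → ℝ) (hN : IsNorm2 N)
    (v : ℝ × ℝ) (hv : NotRat2 v)
    (w : ℕ → ℕ × (ℤ × ℤ))
    (h0 : (w 0).1 = 1)
    (hmono : ∀ n : ℕ, (w n).1 < (w (n + 1)).1)
    (hdec : ∀ n : ℕ, 1 ≤ n →
      N (((w n).1 : ℝ) • v - (((w n).2.1 : ℝ), ((w n).2.2 : ℝ))) <
        N (((w (n - 1)).1 : ℝ) • v -
          (((w (n - 1)).2.1 : ℝ), ((w (n - 1)).2.2 : ℝ))))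
    (hempty : ∀ n : ℕ, 1 ≤ n →
      interior {x : ℝ × ℝ × ℝ | 0 ≤ x.1 ∧ x.1 ≤ ((w n).1 : ℝ) ∧
          N (x.1 • v - x.2) ≤
            N (((w (n - 1)).1 : ℝ) • v -
              (((w (n - 1)).2.1 : ℝ), ((w (n - 1)).2.2 : ℝ)))} ∩
        {x : ℝ × ℝ × ℝ | ∃ z : ℤ × ℤ × ℤ,
          x = ((z.1 : ℝ), (z.2.1 : ℝ), (z.2.2 : ℝ))} = ∅) :
    IsBestApproxSeq N v w :=
  statement6_general N hN v w h0 hmono hdec hempty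
end
end
end

section
/- Let c > 0 and define ‖(u₁,u₂)‖_@ := √(u₁² + c·u₂²) on ℝ². Let w₁, w₂, w₃ be a ℤ-basis of the lattice ℤ³, and let q₁ ≥ 1 and q₂ be the first coordinates of w₁ and w₂ respectively. Then there exist G ∈ GL₃(ℝ) and real numbers L > 0, H > 0 such that: (i) the first row of G is (1,0,0); (ii) the lower-right 2×2 block g of G satisfies ‖g(u)‖_@ = ‖u‖_@ for all u ∈ ℝ²; (iii) G w₁ = (q₁, 0, 0); (iv) G w₂ = (q₂, L, 0); (v) the third coordinate of G w₃ equals H; and (vi) q₁·L·H = 1. -/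
open Real

noncomputable section

/-- the ellipse norm `‖(u₁,u₂)‖_@ = √(u₁² + c u₂²)`. -/
def nAt (c : ℝ) (u : ℝ × ℝ) : ℝ := Real.sqrt (u.1 ^ 2 + c * u.2 ^ 2)

/-- three vectors form a `ℤ`-basis of the lattice `ℤ³ = (Fin 3 → ℤ)`. -/
def IsZBasisFin3 (w₁ w₂ w₃ : Fin 3 → ℤ) : Prop :=
  Submodule.span ℤ ({w₁, w₂, w₃} : Set (Fin 3 → ℤ)) = ⊤ ∧
    LinearIndependent ℤ ![w₁, w₂, w₃]

/-!
Let `W` be the integer matrix with rows `w₁, w₂, w₃`, so `ε := det W = ±1`. Take `G` with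
first row `(1, 0, 0)`, lower-right block a `‖·‖_@`-isometry `g` of determinant `ε`, and first
column chosen so that `G w₁ = (q₁, 0, 0)`. Then the last two coordinates of `G w₂` are `g V / q₁`,
where `V` is the tail of `q₁ w₂ - q₂ w₁`; it is nonzero by linear independence, so `g` can be
chosen to send it to `(‖V‖_@, 0)`, giving `L = ‖V‖_@ / q₁`. The matrix with rows `G wᵢ` is then
lower triangular with diagonal `q₁, L, H`, and its determinant is `det G · det W = ε² = 1`.
-/

open Matrix

lemma nAt_pos {c : ℝ} (hc : 0 < c) {u : ℝ × ℝ} (hu : u ≠ 0) : 0 < nAt c u := by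
  refine Real.sqrt_pos.mpr ?_
  rcases u with ⟨u₁, u₂⟩
  by_cases h₁ : u₁ = 0
  · have h₂ : u₂ ≠ 0 := fun h₂ => hu (by simp [h₁, h₂])
    simp only
    positivity
  · simp only
    positivity

lemma sq_nAt {c : ℝ} (hc : 0 ≤ c) (u : ℝ × ℝ) : nAt c u ^ 2 = u.1 ^ 2 + c * u.2 ^ 2 :=
  Real.sq_sqrt (by positivity)

def ellIsometry (c ε : ℝ) (V : ℝ × ℝ) : Matrix (Fin 2) (Fin 2) ℝ :=
  (nAt c V)⁻¹ • !![V.1, c * V.2; -(ε * V.2), ε * V.1]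

section ellIsometry

variable {c ε : ℝ} {V : ℝ × ℝ}

lemma nAt_ellIsometry_apply (hc : 0 ≤ c) (hV : nAt c V ≠ 0) (hε : ε * ε = 1) (u : ℝ × ℝ) :
    nAt c (ellIsometry c ε V 0 0 * u.1 + ellIsometry c ε V 0 1 * u.2,
      ellIsometry c ε V 1 0 * u.1 + ellIsometry c ε V 1 1 * u.2) = nAt c u := by
  have hS := sq_nAt hc V
  simp only [nAt, ellIsometry] at hV hS ⊢
  congr 1
  simp only [Matrix.smul_apply, of_apply, cons_val', cons_val_zero, cons_val_one, cons_val_fin_one,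
    smul_eq_mul]
  field_simp
  -- `(V₁u₁ + cV₂u₂)² + c (V₁u₂ - V₂u₁)² = (V₁² + cV₂²)(u₁² + cu₂²)`
  linear_combination (-(u.1 ^ 2 + c * u.2 ^ 2)) * hS + c * (V.1 * u.2 - V.2 * u.1) ^ 2 * hε

lemma ellIsometry_apply_self (hc : 0 ≤ c) (hV : nAt c V ≠ 0) :
    ellIsometry c ε V 0 0 * V.1 + ellIsometry c ε V 0 1 * V.2 = nAt c V ∧
      ellIsometry c ε V 1 0 * V.1 + ellIsometry c ε V 1 1 * V.2 = 0 := by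
  have hS := sq_nAt hc V
  simp only [ellIsometry, Matrix.smul_apply, of_apply, cons_val', cons_val_zero, cons_val_one,
    cons_val_fin_one, smul_eq_mul]
  constructor
  · field_simp
    linear_combination -hS
  · ring

lemma det_ellIsometry (hc : 0 ≤ c) (hV : nAt c V ≠ 0) : (ellIsometry c ε V).det = ε := by
  have hS := sq_nAt hc V
  simp only [ellIsometry, det_smul, det_fin_two_of, Fintype.card_fin]
  field_simp
  linear_combination -ε * hS

end ellIsometry

/-- The last two coordinates of `x 0 • y - y 0 • x`. -/
def eliminateFirst (x y : Fin 3 → ℝ) : ℝ × ℝ :=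
  (x 0 * y 1 - y 0 * x 1, x 0 * y 2 - y 0 * x 2)

/-- The first column is forced by requiring that `x` be mapped to `(x 0, 0, 0)`. -/
def reduceFirst (x : Fin 3 → ℝ) (g : Matrix (Fin 2) (Fin 2) ℝ) : Matrix (Fin 3) (Fin 3) ℝ :=
  !![1, 0, 0;
    -(g 0 0 * x 1 + g 0 1 * x 2) / x 0, g 0 0, g 0 1;
    -(g 1 0 * x 1 + g 1 1 * x 2) / x 0, g 1 0, g 1 1]

section reduceFirst

variable {x : Fin 3 → ℝ} (g : Matrix (Fin 2) (Fin 2) ℝ)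

lemma reduceFirst_mulVec_self (hx : x 0 ≠ 0) : reduceFirst x g *ᵥ x = ![x 0, 0, 0] := by
  ext i
  fin_cases i <;>
    simp only [reduceFirst, mulVec, dotProduct, Fin.sum_univ_three, of_apply, cons_val',
      cons_val_fin_one, cons_val_zero, cons_val_one, cons_val, Fin.zero_eta, Fin.mk_one,
      Fin.reduceFinMk] <;>
    field_simp <;> ring

lemma reduceFirst_mulVec (hx : x 0 ≠ 0) (y : Fin 3 → ℝ) :
    reduceFirst x g *ᵥ y = ![y 0,
      (g 0 0 * (eliminateFirst x y).1 + g 0 1 * (eliminateFirst x y).2) / x 0,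
      (g 1 0 * (eliminateFirst x y).1 + g 1 1 * (eliminateFirst x y).2) / x 0] := by
  ext i
  fin_cases i <;>
    simp only [eliminateFirst, reduceFirst, mulVec, dotProduct, Fin.sum_univ_three, of_apply,
      cons_val', cons_val_fin_one, cons_val_zero, cons_val_one, cons_val, Fin.zero_eta, Fin.mk_one,
      Fin.reduceFinMk] <;>
    field_simp <;> ring

lemma det_reduceFirst : (reduceFirst x g).det = g.det := by
  simp [reduceFirst, det_fin_three, det_fin_two]

end reduceFirst

lemma Matrix.det_of_mulVec {n R : Type*} [Fintype n] [DecidableEq n] [CommRing R]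
    (G : Matrix n n R) (v : n → n → R) :
    (of fun i => G *ᵥ v i).det = G.det * (of v).det := by
  have : (of fun i => G *ᵥ v i) = of v * Gᵀ := by
    ext i j
    simp [mulVec, dotProduct, mul_apply, mul_comm]
  rw [this, det_mul, det_transpose, mul_comm]

lemma eliminateFirst_intCast_ne_zero {x y : Fin 3 → ℤ} (hxy : LinearIndependent ℤ ![x, y])
    (hx : x 0 ≠ 0) : eliminateFirst (fun i => (x i : ℝ)) (fun i => (y i : ℝ)) ≠ 0 := by
  intro h
  simp only [eliminateFirst, Prod.mk_eq_zero, sub_eq_zero] at h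
  have h₁ : x 0 * y 1 = y 0 * x 1 := by exact_mod_cast h.1
  have h₂ : x 0 * y 2 = y 0 * x 2 := by exact_mod_cast h.2
  have hrel : (-y 0) • x + x 0 • y = 0 := by
    ext i
    simp only [Pi.add_apply, Pi.smul_apply, smul_eq_mul, Pi.zero_apply]
    fin_cases i <;> simp only [Fin.zero_eta, Fin.mk_one, Fin.reduceFinMk] <;> linarith
  exact hx (LinearIndependent.pair_iff.mp hxy _ _ hrel).2

namespace IsZBasisFin3

variable {w₁ w₂ w₃ : Fin 3 → ℤ}

lemma isUnit_det (h : IsZBasisFin3 w₁ w₂ w₃) : IsUnit (of ![w₁, w₂, w₃]).det := by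
  have hrange : Set.range ![w₁, w₂, w₃] = {w₁, w₂, w₃} := by
    rw [range_cons, range_cons, range_cons, range_empty]
    simp only [Set.union_empty, Set.singleton_union]
  have := (Pi.basisFun ℤ (Fin 3)).is_basis_iff_det.mp ⟨h.2, hrange ▸ h.1⟩
  rwa [Pi.basisFun_det] at this

lemma linearIndependent_pair (h : IsZBasisFin3 w₁ w₂ w₃) : LinearIndependent ℤ ![w₁, w₂] := by
  convert h.2.comp _ (Fin.castSucc_injective 2) using 1
  ext i : 1
  fin_cases i <;> rfl

end IsZBasisFin3

theorem statement7
    (c : ℝ) (hc : 0 < c)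
    (w₁ w₂ w₃ : Fin 3 → ℤ)
    (hbasis : IsZBasisFin3 w₁ w₂ w₃)
    (hq₁ : 1 ≤ w₁ 0) :
    ∃ (G : Matrix (Fin 3) (Fin 3) ℝ) (L H : ℝ), IsUnit G.det ∧ 0 < L ∧ 0 < H ∧
      -- (i) first row of G is (1, 0, 0)
      (G 0 0 = 1 ∧ G 0 1 = 0 ∧ G 0 2 = 0) ∧
      -- (ii) the lower-right 2×2 block preserves ‖·‖_@
      (∀ u : ℝ × ℝ,
        nAt c (G 1 1 * u.1 + G 1 2 * u.2, G 2 1 * u.1 + G 2 2 * u.2) =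
          nAt c u) ∧
      -- (iii) G w₁ = (q₁, 0, 0)
      G.mulVec (fun i => (w₁ i : ℝ)) = ![(w₁ 0 : ℝ), 0, 0] ∧
      -- (iv) G w₂ = (q₂, L, 0)
      G.mulVec (fun i => (w₂ i : ℝ)) = ![(w₂ 0 : ℝ), L, 0] ∧
      -- (v) the third coordinate of G w₃ equals H
      G.mulVec (fun i => (w₃ i : ℝ)) 2 = H ∧
      -- (vi) q₁ · L · H = 1
      (w₁ 0 : ℝ) * L * H = 1 := by
  set W : Fin 3 → Fin 3 → ℝ := fun i j => (![w₁, w₂, w₃] i j : ℝ)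
  have hq : (0 : ℝ) < w₁ 0 := by exact_mod_cast zero_lt_one.trans_le hq₁
  set V := eliminateFirst (W 0) (W 1)
  have hV : 0 < nAt c V :=
    nAt_pos hc <| eliminateFirst_intCast_ne_zero hbasis.linearIndependent_pair <| by
      exact_mod_cast hq.ne'
  set ε : ℝ := (of W).det
  have hε : ε * ε = 1 := by
    have hcast : ε = ((of ![w₁, w₂, w₃]).det : ℝ) := by rw [Int.cast_det]; rfl
    rw [hcast]
    exact_mod_cast Int.isUnit_mul_self hbasis.isUnit_det
  set G := reduceFirst (W 0) (ellIsometry c ε V)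
  set L := nAt c V / w₁ 0
  have hG₁ : G *ᵥ W 0 = ![(w₁ 0 : ℝ), 0, 0] := reduceFirst_mulVec_self _ hq.ne'
  have hG₂ : G *ᵥ W 1 = ![(w₂ 0 : ℝ), L, 0] := by
    obtain ⟨h₁, h₂⟩ := ellIsometry_apply_self (ε := ε) hc.le hV.ne'
    rw [reduceFirst_mulVec _ hq.ne', h₁, h₂, zero_div]
    rfl
  have hdetG : G.det = ε := by rw [det_reduceFirst, det_ellIsometry hc.le hV.ne']
  have hqLH : (w₁ 0 : ℝ) * L * (G *ᵥ W 2) 2 = 1 := by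
    have := G.det_of_mulVec W
    rw [det_fin_three] at this
    simp only [of_apply, hG₁, hG₂, cons_val_zero, cons_val_one, cons_val, mul_zero, zero_mul,
      sub_zero, add_zero] at this
    rw [this, hdetG, hε]
  have hL : 0 < L := div_pos hV hq
  refine ⟨G, L, _, ?_, hL, ?_, ⟨rfl, rfl, rfl⟩, nAt_ellIsometry_apply hc.le hV.ne' hε, hG₁, hG₂,
    rfl, hqLH⟩
  · exact IsUnit.of_mul_eq_one _ (hdetG ▸ hε)
  · exact pos_of_mul_pos_right (hqLH ▸ one_pos) (mul_pos hq hL).le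
end
end

section
/- Fix reals c, q, L > 0, D > 0 and Q₂ ∈ ℝ. Then the set B₂ ⊆ ℝ² is symmetric and star-shaped with respect to the origin; more precisely, if (x, y) lies in the closure of B₂, then (t·x, t·y) ∈ B₂ for every t with −1 < t < 1. -/
open Real

noncomputable section

/-- `Θ_x = √(x² + c q²)`. -/
def thetaAt (c q x : ℝ) : ℝ := Real.sqrt (x ^ 2 + c * q ^ 2)

/-- the set `B₂`. -/
def B2 (c q L D Q2 : ℝ) : Set (ℝ × ℝ) :=
  {p | ∀ s i : ℤ, i ≠ 0 →
    D * q * |p.2| / thetaAt c q p.1 <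
      nAt c
        (((s : ℝ) * q + (i : ℝ) * Q2) * p.1 * p.2 / (thetaAt c q p.1) ^ 2 -
            (i : ℝ) * L,
          ((s : ℝ) * q + (i : ℝ) * Q2) * q * p.2 / (thetaAt c q p.1) ^ 2)}

/-!
Since `Θ_x² = x² + c q²`, clearing denominators turns the constraint of `B₂` indexed by `(s, i)`
into `(D q y)² - (β y - ζ x)² < ζ² c q²`: a quadratic form in `(x, y)` below a positive constant.
On the closure the inequality holds weakly, and scaling by `t` multiplies the form by `t² < 1`.
-/

theorem smul_mem_of_mem_closure_of_sq_homogeneous {ι E : Type*} [TopologicalSpace E] [SMul ℝ E]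
    {Φ : ι → E → ℝ} {K : ι → ℝ} (hΦ : ∀ j, Continuous (Φ j))
    (hhom : ∀ j (t : ℝ) p, Φ j (t • p) = t ^ 2 * Φ j p) (hK : ∀ j, 0 < K j)
    {p : E} (hp : p ∈ closure {p | ∀ j, Φ j p < K j}) {t : ℝ} (ht : |t| < 1) :
    ∀ j, Φ j (t • p) < K j := by
  have hclosed : IsClosed {p | ∀ j, Φ j p ≤ K j} := by
    simp only [Set.ofPred_forall]
    exact isClosed_iInter fun j => isClosed_le (hΦ j) continuous_const
  have hle : ∀ j, Φ j p ≤ K j :=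
    closure_minimal (fun p hp j => (hp j).le) hclosed hp
  have ht2 : t ^ 2 < 1 := by rwa [sq_lt_one_iff_abs_lt_one]
  intro j
  rw [hhom]
  calc t ^ 2 * Φ j p ≤ t ^ 2 * K j := mul_le_mul_of_nonneg_left (hle j) (sq_nonneg t)
    _ < K j := mul_lt_of_lt_one_left (hK j) ht2

lemma thetaAt_sq {c q : ℝ} (hc : 0 ≤ c) (x : ℝ) : thetaAt c q x ^ 2 = x ^ 2 + c * q ^ 2 :=
  Real.sq_sqrt (by positivity)

lemma div_thetaAt_lt_nAt_iff {c q a : ℝ} (hc : 0 < c) (hq : q ≠ 0) (ha : 0 ≤ a) (x y β ζ : ℝ) :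
    a / thetaAt c q x <
        nAt c (β * x * y / thetaAt c q x ^ 2 - ζ, β * q * y / thetaAt c q x ^ 2) ↔
      a ^ 2 < (β * y - ζ * x) ^ 2 + ζ ^ 2 * (c * q ^ 2) := by
  have hS : 0 < x ^ 2 + c * q ^ 2 := by positivity
  have key : (β * x * y / thetaAt c q x ^ 2 - ζ) ^ 2 + c * (β * q * y / thetaAt c q x ^ 2) ^ 2
      - (a / thetaAt c q x) ^ 2
      = ((β * y - ζ * x) ^ 2 + ζ ^ 2 * (c * q ^ 2) - a ^ 2) / (x ^ 2 + c * q ^ 2) := by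
    rw [div_pow a, thetaAt_sq hc.le]
    field_simp
    ring
  have hθ : 0 ≤ thetaAt c q x := Real.sqrt_nonneg _
  rw [nAt, Real.lt_sqrt (div_nonneg ha hθ), ← sub_pos, key, div_pos_iff_of_pos_right hS, sub_pos]

theorem B2_eq_quadratic_sublevel (c q L D Q2 : ℝ) (hc : 0 < c) (hq : q ≠ 0) (hDq : 0 ≤ D * q) :
    B2 c q L D Q2 = {p | ∀ j : {j : ℤ × ℤ // j.2 ≠ 0},
      (D * q * p.2) ^ 2 - ((j.1.1 * q + j.1.2 * Q2) * p.2 - j.1.2 * L * p.1) ^ 2 <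
        (j.1.2 * L) ^ 2 * (c * q ^ 2)} := by
  ext p
  simp only [B2, Set.mem_ofPred_eq, Subtype.forall, Prod.forall]
  refine forall₂_congr fun s i => forall_congr' fun _ => ?_
  rw [div_thetaAt_lt_nAt_iff hc hq (mul_nonneg hDq (abs_nonneg _)), mul_pow _ |p.2|, sq_abs,
    mul_pow _ p.2, sub_lt_iff_lt_add']

theorem statement10
    (c q L D Q2 : ℝ) (hc : 0 < c) (hq : 0 < q) (hL : 0 < L) (hD : 0 < D)
    (x y : ℝ) (hxy : (x, y) ∈ closure (B2 c q L D Q2))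
    (t : ℝ) (ht1 : -1 < t) (ht2 : t < 1) :
    (t * x, t * y) ∈ B2 c q L D Q2 := by
  rw [B2_eq_quadratic_sublevel c q L D Q2 hc hq.ne' (mul_pos hD hq).le] at hxy ⊢
  have hK : ∀ j : {j : ℤ × ℤ // j.2 ≠ 0}, 0 < ((j.1.2 : ℝ) * L) ^ 2 * (c * q ^ 2) := fun j => by
    have : (j.1.2 : ℝ) ≠ 0 := Int.cast_ne_zero.2 j.2
    positivity
  exact smul_mem_of_mem_closure_of_sq_homogeneous (fun _ => by fun_prop)
    (fun _ t p => by simp only [Prod.smul_fst, Prod.smul_snd, smul_eq_mul]; ring)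
    hK hxy (abs_lt.2 ⟨ht1, ht2⟩)
end
end

section
/- Fix reals c, q, L > 0, D > 0 and Q₂ ∈ ℝ. Then the set B₂ is an open subset of ℝ². -/
open Real

noncomputable section

/-! Every condition indexed by `(s, i)` cuts out an open set, so it suffices that near any
point only finitely many of them can fail. If the condition fails at `(x, y)`, then `y ≠ 0`,
the second coordinate of the ellipse norm gives `√c |β| ≤ D Θ_x`, and feeding this into the
first coordinate gives `|i| L ≤ D |y| (1/√c + |x|/(c q))`. On a bounded neighbourhood this
bounds `|β|` and `|i|`, hence `|s|`, so the complement of `B₂` is a locally finite union of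
closed sets. -/

variable {c q L D Q2 β ι x y : ℝ}

@[fun_prop]
lemma continuous_nAt (c : ℝ) : Continuous (nAt c) := by
  unfold nAt; fun_prop

lemma abs_fst_le_nAt (hc : 0 ≤ c) (u : ℝ × ℝ) : |u.1| ≤ nAt c u := by
  rw [nAt, ← Real.sqrt_sq_eq_abs]
  exact Real.sqrt_le_sqrt (by nlinarith [sq_nonneg u.2])

lemma sqrt_mul_abs_snd_le_nAt (hc : 0 ≤ c) (u : ℝ × ℝ) : √c * |u.2| ≤ nAt c u := by
  rw [nAt, ← Real.sqrt_sq_eq_abs, ← Real.sqrt_mul hc]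
  exact Real.sqrt_le_sqrt (by nlinarith [sq_nonneg u.1])

@[fun_prop]
lemma continuous_thetaAt (c q : ℝ) : Continuous (thetaAt c q) := by
  unfold thetaAt; fun_prop

lemma thetaAt_pos (hc : 0 < c) (hq : 0 < q) (x : ℝ) : 0 < thetaAt c q x :=
  Real.sqrt_pos.mpr (by positivity)

lemma sqrt_mul_le_thetaAt (hc : 0 ≤ c) (hq : 0 ≤ q) (x : ℝ) : √c * q ≤ thetaAt c q x :=
  calc √c * q = √(c * q ^ 2) := by rw [Real.sqrt_mul hc, Real.sqrt_sq hq]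
    _ ≤ thetaAt c q x := Real.sqrt_le_sqrt (by nlinarith [sq_nonneg x])

lemma thetaAt_le_thetaAt {x X : ℝ} (h : |x| ≤ |X|) : thetaAt c q x ≤ thetaAt c q X :=
  Real.sqrt_le_sqrt (by nlinarith [sq_le_sq.mpr h])

lemma ne_zero_of_nAt_le (hι : ι ≠ 0) (hL : L ≠ 0)
    (h : nAt c (β * x * y / thetaAt c q x ^ 2 - ι * L, β * q * y / thetaAt c q x ^ 2) ≤
      D * q * |y| / thetaAt c q x) : y ≠ 0 := by
  rintro rfl
  simp only [nAt, mul_zero, zero_div, zero_sub, abs_zero, neg_sq, ne_eq, OfNat.ofNat_ne_zero,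
    not_false_eq_true, zero_pow, add_zero, Real.sqrt_sq_eq_abs] at h
  exact mul_ne_zero hι hL (abs_nonpos_iff.mp h)

lemma sqrt_mul_abs_le_of_nAt_le (hc : 0 < c) (hq : 0 < q) (hy : y ≠ 0)
    (h : nAt c (β * x * y / thetaAt c q x ^ 2 - ι * L, β * q * y / thetaAt c q x ^ 2) ≤
      D * q * |y| / thetaAt c q x) : √c * |β| ≤ D * thetaAt c q x := by
  set θ := thetaAt c q x
  have hθ : 0 < θ := thetaAt_pos hc hq x
  have hqy : 0 < q * |y| / θ ^ 2 := by positivity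
  refine le_of_mul_le_mul_right ?_ hqy
  calc √c * |β| * (q * |y| / θ ^ 2) = √c * |β * q * y / θ ^ 2| := by
        rw [abs_div, abs_mul, abs_mul, abs_of_pos hq, abs_of_pos (by positivity : 0 < θ ^ 2)]
        ring
    _ ≤ D * q * |y| / θ := (sqrt_mul_abs_snd_le_nAt hc.le _).trans h
    _ = D * θ * (q * |y| / θ ^ 2) := by field_simp

lemma abs_mul_le_of_nAt_le (hc : 0 < c) (hq : 0 < q) (hD : 0 ≤ D) (hy : y ≠ 0)
    (h : nAt c (β * x * y / thetaAt c q x ^ 2 - ι * L, β * q * y / thetaAt c q x ^ 2) ≤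
      D * q * |y| / thetaAt c q x) : |ι * L| ≤ D * |y| * (1 / √c + |x| / (c * q)) := by
  have hβ := sqrt_mul_abs_le_of_nAt_le hc hq hy h
  set θ := thetaAt c q x
  have hθ : √c * q ≤ θ := sqrt_mul_le_thetaAt hc.le hq.le x
  have hθ0 : 0 < θ := thetaAt_pos hc hq x
  have hβxy : |β * x * y / θ ^ 2| ≤ D * |x| * |y| / (√c * θ) := by
    rw [abs_div, abs_mul, abs_mul, abs_of_pos (by positivity : 0 < θ ^ 2),
      div_le_div_iff₀ (by positivity) (by positivity)]
    linear_combination (|x| * |y| * θ) * hβ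
  calc |ι * L| = |(β * x * y / θ ^ 2 - ι * L) - β * x * y / θ ^ 2| := by
        rw [sub_sub_cancel_left, abs_neg]
    _ ≤ |β * x * y / θ ^ 2 - ι * L| + |β * x * y / θ ^ 2| := abs_sub _ _
    _ ≤ D * q * |y| / θ + D * |x| * |y| / (√c * θ) :=
        add_le_add ((abs_fst_le_nAt hc.le _).trans h) hβxy
    _ ≤ D * q * |y| / (√c * q) + D * |x| * |y| / (√c * (√c * q)) := by gcongr
    _ = D * |y| * (1 / √c + |x| / (c * q)) := by
      field_simp
      linear_combination (-(D * |x|)) * Real.mul_self_sqrt hc.le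

lemma finite_setOf_abs_intCast_le (K : ℝ) : {n : ℤ | |(n : ℝ)| ≤ K}.Finite :=
  (Set.finite_Icc (-⌈K⌉) ⌈K⌉).subset fun n hn => by
    obtain ⟨hl, hr⟩ := abs_le.mp (Set.mem_ofPred.mp hn)
    constructor
    · rw [neg_le]; exact_mod_cast (neg_le.mp hl).trans (Int.le_ceil K)
    · exact_mod_cast hr.trans (Int.le_ceil K)

lemma finite_setOf_abs_add_le {q : ℝ} (hq : 0 < q) (Q A N : ℝ) :
    {si : ℤ × ℤ | |si.1 * q + si.2 * Q| ≤ A ∧ |(si.2 : ℝ)| ≤ N}.Finite := by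
  refine ((finite_setOf_abs_intCast_le ((A + N * |Q|) / q)).prod
    (finite_setOf_abs_intCast_le N)).subset ?_
  rintro ⟨s, i⟩ ⟨hβ, hi⟩
  refine ⟨?_, hi⟩
  rw [Set.mem_ofPred, le_div_iff₀ hq, ← abs_of_pos hq, ← abs_mul]
  calc |(s : ℝ) * q| = |(s * q + i * Q) - i * Q| := by rw [add_sub_cancel_right]
    _ ≤ |(s : ℝ) * q + i * Q| + |(i : ℝ)| * |Q| := by rw [← abs_mul]; exact abs_sub _ _
    _ ≤ A + N * |Q| := by gcongr

def B2Slice (c q L D Q2 : ℝ) (si : ℤ × ℤ) : Set (ℝ × ℝ) :=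
  {p | si.2 ≠ 0 →
    D * q * |p.2| / thetaAt c q p.1 <
      nAt c
        (((si.1 : ℝ) * q + (si.2 : ℝ) * Q2) * p.1 * p.2 / (thetaAt c q p.1) ^ 2 -
            (si.2 : ℝ) * L,
          ((si.1 : ℝ) * q + (si.2 : ℝ) * Q2) * q * p.2 / (thetaAt c q p.1) ^ 2)}

lemma B2_eq_iInter_B2Slice : B2 c q L D Q2 = ⋂ si, B2Slice c q L D Q2 si := by
  ext p
  simp [B2, B2Slice]

lemma isOpen_B2Slice (hc : 0 < c) (hq : 0 < q) (si : ℤ × ℤ) :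
    IsOpen (B2Slice c q L D Q2 si) := by
  by_cases hi : si.2 = 0
  · simp [B2Slice, hi]
  · simp only [B2Slice, hi, ne_eq, not_false_eq_true, forall_const]
    refine isOpen_lt ?_ ?_ <;>
      fun_prop (disch := intro p; have := thetaAt_pos hc hq p.1; positivity)

lemma locallyFinite_compl_B2Slice (hc : 0 < c) (hq : 0 < q) (hL : 0 < L) (hD : 0 ≤ D) :
    LocallyFinite fun si => (B2Slice c q L D Q2 si)ᶜ := by
  intro p
  set X := |p.1| + 1
  set Y := |p.2| + 1
  refine ⟨{p' | |p'.1| < X} ∩ {p' | |p'.2| < Y}, ?_, ?_⟩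
  · exact ((isOpen_lt (by fun_prop) continuous_const).inter
      (isOpen_lt (by fun_prop) continuous_const)).mem_nhds
      ⟨show |p.1| < X from lt_add_one _, show |p.2| < Y from lt_add_one _⟩
  refine (finite_setOf_abs_add_le hq Q2 (D * thetaAt c q X / √c)
    (D * Y * (1 / √c + X / (c * q)) / L)).subset ?_
  rintro ⟨s, i⟩ ⟨p', hbad, hx : |p'.1| < X, hy : |p'.2| < Y⟩
  simp only [B2Slice, Set.mem_compl_iff, Set.mem_ofPred_eq, Classical.not_imp, not_lt] at hbad
  obtain ⟨hi, hle⟩ := hbad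
  have hy0 := ne_zero_of_nAt_le (by exact_mod_cast hi) hL.ne' hle
  constructor
  · rw [le_div_iff₀ (Real.sqrt_pos.mpr hc), mul_comm]
    calc √c * |(s : ℝ) * q + i * Q2| ≤ D * thetaAt c q p'.1 :=
          sqrt_mul_abs_le_of_nAt_le hc hq hy0 hle
      _ ≤ D * thetaAt c q X := by
          gcongr
          exact thetaAt_le_thetaAt (hx.le.trans (le_abs_self X))
  · rw [le_div_iff₀ hL]
    calc |(i : ℝ)| * L = |(i : ℝ) * L| := by rw [abs_mul, abs_of_pos hL]
      _ ≤ D * |p'.2| * (1 / √c + |p'.1| / (c * q)) := abs_mul_le_of_nAt_le hc hq hD hy0 hle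
      _ ≤ D * Y * (1 / √c + X / (c * q)) := by gcongr

theorem statement11
    (c q L D Q2 : ℝ) (hc : 0 < c) (hq : 0 < q) (hL : 0 < L) (hD : 0 < D) :
    IsOpen (B2 c q L D Q2) := by
  rw [B2_eq_iInter_B2Slice, ← isClosed_compl_iff, Set.compl_iInter]
  exact (locallyFinite_compl_B2Slice hc hq hL hD.le).isClosed_iUnion
    fun si => (isOpen_B2Slice hc hq si).isClosed_compl
end
end

section
/- Fix reals c, q, L > 0, D > 0 and Q₂ ∈ ℝ. If (x, y) ∈ B₂ then (x + k·q·y/L, y) ∈ B₂ for every k ∈ ℤ. -/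
open Real

noncomputable section

/-! Multiplying the defining inequality of `B₂` by `Θ_x` clears every denominator: the condition
for `(s, i)` becomes `D q |y| < √((β y - i L x)² + c (i L q)²)`. In this form, replacing `x` by
`x + k q y / L` is undone by replacing `s` by `s - i k`, since both change `β y - i L x` by the
same amount `i k q y`. -/

lemma nAt_mul_thetaAt {c q : ℝ} (hc : 0 < c) (hq : q ≠ 0) (x y β ζ : ℝ) :
    nAt c (β * x * y / thetaAt c q x ^ 2 - ζ, β * q * y / thetaAt c q x ^ 2) * thetaAt c q x =
      √((β * y - ζ * x) ^ 2 + c * (ζ * q) ^ 2) := by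
  have hθ : thetaAt c q x ^ 2 = x ^ 2 + c * q ^ 2 := sq_sqrt (by positivity)
  have hθ0 : 0 ≤ thetaAt c q x := sqrt_nonneg _
  rw [nAt, ← sq_eq_sq₀ (by positivity) (by positivity), mul_pow, sq_sqrt (by positivity),
    sq_sqrt (by positivity), hθ]
  field_simp
  ring

lemma mem_B2_iff {c q : ℝ} (hc : 0 < c) (hq : q ≠ 0) (L D Q2 : ℝ) (p : ℝ × ℝ) :
    p ∈ B2 c q L D Q2 ↔ ∀ s i : ℤ, i ≠ 0 →
      D * q * |p.2| < √((((s : ℝ) * q + i * Q2) * p.2 - i * L * p.1) ^ 2 + c * (i * L * q) ^ 2) := by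
  have hθ : 0 < thetaAt c q p.1 := sqrt_pos.mpr (by positivity)
  refine forall₂_congr fun s i => imp_congr_right fun _ => ?_
  rw [div_lt_iff₀ hθ, nAt_mul_thetaAt hc hq]

theorem statement12_general
    (c q L D Q2 : ℝ) (hc : 0 < c) (hq : 0 < q) (hL : 0 < L)
    (x y : ℝ) (hxy : (x, y) ∈ B2 c q L D Q2) (k : ℤ) :
    (x + (k : ℝ) * q * y / L, y) ∈ B2 c q L D Q2 := by
  rw [mem_B2_iff hc hq.ne'] at hxy ⊢
  intro s i hi
  convert hxy (s - i * k) i hi using 4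
  push_cast
  field_simp
  ring

theorem statement12
    (c q L D Q2 : ℝ) (hc : 0 < c) (hq : 0 < q) (hL : 0 < L) (hD : 0 < D)
    (x y : ℝ) (hxy : (x, y) ∈ B2 c q L D Q2) (k : ℤ) :
    (x + (k : ℝ) * q * y / L, y) ∈ B2 c q L D Q2 :=
  statement12_general c q L D Q2 hc hq hL x y hxy k
end
end

section
/- Fix reals c, q, L, H > 0, D ≥ 1, Q₂ ≥ 0, Q₃ ∈ ℝ, u ∈ ℝ, with q·L·H = 1. Fix an integer m ≥ 1, i₀ ∈ ℤ, 0 < t₀ < 1 and ε > 0. Set y₀ := √(4c/(4D² − 1))·L, x₀ := √(4c/(4D² − 1))·(Q₂ + q/2), Y₂ := t₀·y₀, X₂[k] := t₀·(x₀ + k·q·y₀/L), Δ_k := Y₂·ε/(X₂[k] + ε), □_k := [X₂[k] − ε, X₂[k]] × [Y₂ − Δ_k, Y₂], and f₂(x, y) := (H·(x² + c·q²)/(q·y), H·x/q). Assume H²·q·Y₂/L is irrational. Then there exist infinitely many k ∈ ℕ for which there are integers s_k, i_k such that for every r ∈ {0, 1, …, m−1} the point ((s_k + r)·q + (i₀ +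 m·i_k)·Q₂ + Q₃, (i₀ + m·i_k)·L + u) belongs to the image f₂(□_k); moreover along these k the quantities (s_k + r)·q + (i₀ + m·i_k)·Q₂ tend to infinity. -/
open Real Filter

noncomputable section

/-- the planar part of the map `f₂`: `f₂(x,y) = (H(x² + cq²)/(qy), Hx/q)`. -/
def f2p (c q H : ℝ) (p : ℝ × ℝ) : ℝ × ℝ :=
  (H * (p.1 ^ 2 + c * q ^ 2) / (q * p.2), H * p.1 / q)

/-!
The second coordinate of `f₂` is `Hx/q`, so the target points at height `(i₀ + m i)L + u` come
from `x = a + iP` with `a = q(i₀L + u)/H` and `P = qmL/H`. The `X₂[k]` form an arithmetic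
progression whose step divided by `P` is the irrational `H²qY₂/(Lm)`, so some `a + iP` falls in
`[X₂[k] - ε, X₂[k]]` for infinitely many `k`: by Dirichlet's approximation theorem a subsequence
moves modulo `P` by steps shorter than `ε`, and so cannot jump over the window.
With `x` fixed, as `y` runs over `[Y₂ - Δ_k, Y₂]` the first coordinate `H(x² + cq²)/(qy)` sweeps
an interval of length at least `H(X₂[k] - ε)²ε/(qY₂X₂[k])`, which grows linearly in `X₂[k]`, so
it eventually contains `m` consecutive points of any progression of step `q`; its left end grows
quadratically in `X₂[k]`, which gives the divergence.
-/

open Set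

theorem Int.fract_le_sub_of_intCast_le {R : Type*} [Ring R] [LinearOrder R] [IsOrderedRing R]
    [FloorRing R] {a : R} {z : ℤ} (h : (z : R) ≤ a) : Int.fract a ≤ a - z :=
  sub_le_sub_left (Int.cast_le.mpr (Int.le_floor.mpr h)) a

section OrderedField

variable {𝕜 : Type*} [Field 𝕜] [LinearOrder 𝕜] [IsStrictOrderedRing 𝕜]

theorem div_add_le_div_sub_div {N q Y X ε M : 𝕜} (hq : 0 < q) (hY : 0 < Y) (hX : 0 < X)
    (hε : 0 < ε) (h : M * q * Y * X ≤ N * ε) :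
    N / (q * Y) + M ≤ N / (q * (Y - Y * ε / (X + ε))) := by
  have hY' : Y - Y * ε / (X + ε) = Y * X / (X + ε) := by field_simp; ring
  rw [hY', div_add' _ _ _ (by positivity), div_le_div_iff₀ (by positivity) (by positivity)]
  field_simp
  nlinarith [mul_pos hq hY]

theorem eventually_mul_le_mul_sub_sq (C ε : 𝕜) {D : 𝕜} (hD : 0 < D) :
    ∀ᶠ X in atTop, C * X ≤ D * (X - ε) ^ 2 := by
  filter_upwards [eventually_ge_atTop 0, eventually_ge_atTop (2 * ε),
    eventually_ge_atTop (4 * C / D)] with X h0 hε hC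
  rw [div_le_iff₀ hD] at hC
  have hsq : (X / 2) ^ 2 ≤ (X - ε) ^ 2 := pow_le_pow_left₀ (by linarith) (by linarith) 2
  nlinarith [mul_le_mul_of_nonneg_left hC h0, mul_le_mul_of_nonneg_left hsq hD.le]

theorem tendsto_const_mul_sub_sq_sub_atTop {a : 𝕜} (ha : 0 < a) (ε b : 𝕜) :
    Tendsto (fun X : 𝕜 => a * (X - ε) ^ 2 - b) atTop atTop := by
  have h := ((tendsto_pow_atTop two_ne_zero).comp
    (tendsto_atTop_add_const_right atTop (-ε) tendsto_id)).const_mul_atTop ha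
  simpa only [sub_eq_add_neg, Function.comp_def, id] using
    tendsto_atTop_add_const_right atTop (-b) h

variable [FloorRing 𝕜]

theorem exists_ge_fract_add_mul_lt_abs (β : 𝕜) {θ : 𝕜} (hθ : θ ≠ 0) (k₀ : ℕ) :
    ∃ k ≥ k₀, Int.fract (β + k * θ) < |θ| := by
  -- `k` is the last (`θ < 0`) or the first (`θ > 0`) step at which `β + kθ ≥ M`
  rcases hθ.lt_or_gt with hθ | hθ
  · set M := ⌊β + k₀ * θ⌋
    have hM : (M : 𝕜) ≤ β + k₀ * θ := Int.floor_le _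
    have hk₀ : (k₀ : 𝕜) ≤ (M - β) / θ := by rw [le_div_iff_of_neg hθ]; linarith
    set k := ⌊(M - β) / θ⌋₊
    have hk : (k : 𝕜) ≤ (M - β) / θ := Nat.floor_le ((Nat.cast_nonneg k₀).trans hk₀)
    have hk' : (M - β) / θ < k + 1 := Nat.lt_floor_add_one _
    rw [le_div_iff_of_neg hθ] at hk
    rw [div_lt_iff_of_neg hθ] at hk'
    refine ⟨k, Nat.le_floor hk₀, ?_⟩
    rw [abs_of_neg hθ]
    linarith [Int.fract_le_sub_of_intCast_le (show (M : 𝕜) ≤ β + k * θ by linarith)]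
  · set M := ⌈β + k₀ * θ⌉
    have hM : β + k₀ * θ ≤ M := Int.le_ceil _
    have hk₀ : (k₀ : 𝕜) ≤ (M - β) / θ := by rw [le_div_iff₀ hθ]; linarith
    set k := ⌈(M - β) / θ⌉₊
    have hk : (M - β) / θ ≤ k := Nat.le_ceil _
    have hk' : (k : 𝕜) < (M - β) / θ + 1 := Nat.ceil_lt_add_one ((Nat.cast_nonneg k₀).trans hk₀)
    have hk₀k : k₀ ≤ k := by exact_mod_cast hk₀.trans hk
    rw [div_le_iff₀ hθ] at hk
    rw [← sub_lt_iff_lt_add, lt_div_iff₀ hθ] at hk'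
    refine ⟨k, hk₀k, ?_⟩
    rw [abs_of_pos hθ]
    linarith [Int.fract_le_sub_of_intCast_le (show (M : 𝕜) ≤ β + k * θ by linarith)]

theorem exists_int_add_mul_mem_Icc_of_fract_lt {a z ε P : 𝕜} (hP : 0 < P)
    (h : Int.fract ((z - a) / P) < ε / P) : ∃ i : ℤ, a + i * P ∈ Icc (z - ε) z := by
  refine ⟨⌊(z - a) / P⌋, ?_, ?_⟩
  · rw [Int.fract, lt_div_iff₀ hP, sub_mul, div_mul_cancel₀ _ hP.ne'] at h
    linarith
  · rw [← le_sub_iff_add_le', ← le_div_iff₀ hP]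
    exact Int.floor_le _

theorem exists_int_forall_add_mul_mem_Icc {q : 𝕜} (hq : 0 < q) (c A : 𝕜) (m : ℕ) :
    ∃ s : ℤ, ∀ r < m, (s + r) * q + c ∈ Icc A (A + m * q) := by
  refine ⟨⌈(A - c) / q⌉, fun r hr => ⟨?_, ?_⟩⟩
  · have h := Int.le_ceil ((A - c) / q)
    rw [div_le_iff₀ hq] at h
    nlinarith [(Nat.cast_nonneg r : (0 : 𝕜) ≤ r)]
  · have h := Int.ceil_lt_add_one ((A - c) / q)
    rw [← sub_lt_iff_lt_add, lt_div_iff₀ hq] at h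
    have hr' : (r : 𝕜) + 1 ≤ m := by exact_mod_cast hr
    nlinarith

end OrderedField

theorem Irrational.frequently_fract_add_mul_lt (β : ℝ) {γ δ : ℝ} (hγ : Irrational γ) (hδ : 0 < δ) :
    ∃ᶠ k : ℕ in atTop, Int.fract (β + k * γ) < δ := by
  obtain ⟨n, hn⟩ := exists_nat_one_div_lt hδ
  obtain ⟨l, hl, -, hlγ⟩ := Real.exists_nat_abs_mul_sub_round_le γ n.succ_pos
  set θ := l * γ - round (l * γ)
  have hθ : θ ≠ 0 := ((hγ.natCast_mul hl.ne').sub_intCast _).ne_zero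
  have hθδ : |θ| < δ := by
    refine hlγ.trans_lt (lt_of_le_of_lt ?_ hn)
    gcongr
    linarith
  refine frequently_atTop.mpr fun k₀ => ?_
  obtain ⟨k, hk, hfract⟩ := exists_ge_fract_add_mul_lt_abs β hθ k₀
  refine ⟨k * l, hk.trans (Nat.le_mul_of_pos_right k hl), ?_⟩
  have : β + ((k * l : ℕ) : ℝ) * γ = β + k * θ + ((k * round (l * γ) : ℤ) : ℝ) := by
    push_cast; ring
  rw [this, Int.fract_add_intCast]
  exact hfract.trans hθδ

theorem Irrational.frequently_exists_int_add_mul_mem_Icc (b a : ℝ) {α P ε : ℝ}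
    (hαP : Irrational (α / P)) (hP : 0 < P) (hε : 0 < ε) :
    ∃ᶠ k : ℕ in atTop, ∃ i : ℤ, a + i * P ∈ Icc (b + k * α - ε) (b + k * α) := by
  refine (hαP.frequently_fract_add_mul_lt ((b - a) / P) (div_pos hε hP)).mono fun k hk => ?_
  refine exists_int_add_mul_mem_Icc_of_fract_lt hP ?_
  rwa [show (b + k * α - a) / P = (b - a) / P + k * (α / P) by ring]

theorem f2p_mk_div {c q H x V : ℝ} (hN : H * (x ^ 2 + c * q ^ 2) ≠ 0) (hq : q ≠ 0) (hV : V ≠ 0) :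
    f2p c q H (x, H * (x ^ 2 + c * q ^ 2) / (q * V)) = (V, H * x / q) := by
  simp only [f2p, Prod.mk.injEq, and_true]
  field_simp
  exact div_self hN

theorem mk_mem_image_f2p {c q H x y₁ y₂ V : ℝ} {s : Set ℝ} (hc : 0 < c) (hq : 0 < q)
    (hH : 0 < H) (hy₁ : 0 < y₁) (hy₂ : 0 < y₂) (hx : x ∈ s)
    (hV : V ∈ Icc (H * (x ^ 2 + c * q ^ 2) / (q * y₂)) (H * (x ^ 2 + c * q ^ 2) / (q * y₁))) :
    (V, H * x / q) ∈ f2p c q H '' (s ×ˢ Icc y₁ y₂) := by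
  set N := H * (x ^ 2 + c * q ^ 2)
  have hN : 0 < N := by positivity
  have hV0 : 0 < V := (div_pos hN (mul_pos hq hy₂)).trans_le hV.1
  refine ⟨(x, N / (q * V)), ⟨hx, ?_, ?_⟩, f2p_mk_div hN.ne' hq.ne' hV0.ne'⟩
  · have h := hV.2
    rw [le_div_iff₀ (by positivity)] at h ⊢
    linarith
  · have h := hV.1
    rw [div_le_iff₀ (by positivity)] at h ⊢
    linarith

theorem exists_int_forall_mem_image_f2p {c q H X Y ε W c₁ : ℝ} (m : ℕ) (hc : 0 < c)
    (hq : 0 < q) (hH : 0 < H) (hY : 0 < Y) (hε : 0 < ε) (hεX : ε ≤ X)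
    (hgrow : m * q ^ 2 * Y * X ≤ H * ε * (X - ε) ^ 2) (hW : q * W / H ∈ Icc (X - ε) X) :
    ∃ s : ℤ, ∀ r < m,
      ((s + r) * q + c₁, W) ∈ f2p c q H '' (Icc (X - ε) X ×ˢ Icc (Y - Y * ε / (X + ε)) Y) ∧
        H / (q * Y) * (X - ε) ^ 2 ≤ (s + r) * q + c₁ := by
  set x := q * W / H
  set N := H * (x ^ 2 + c * q ^ 2)
  have hxN : H * (X - ε) ^ 2 ≤ N := by
    have : (X - ε) ^ 2 ≤ x ^ 2 := pow_le_pow_left₀ (by linarith) hW.1 2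
    nlinarith [mul_pos hc (pow_pos hq 2)]
  have hwindow : N / (q * Y) + m * q ≤ N / (q * (Y - Y * ε / (X + ε))) :=
    div_add_le_div_sub_div hq hY (by linarith) hε (by nlinarith)
  have hY' : 0 < Y - Y * ε / (X + ε) := by
    rw [sub_pos, div_lt_iff₀ (by linarith)]
    nlinarith
  have hHx : H * x / q = W := by simp only [x]; field_simp
  obtain ⟨s, hs⟩ := exists_int_forall_add_mul_mem_Icc hq c₁ (N / (q * Y)) m
  refine ⟨s, fun r hr => ⟨?_, ?_⟩⟩
  · rw [← hHx]
    exact mk_mem_image_f2p hc hq hH hY' hY hW ⟨(hs r hr).1, (hs r hr).2.trans hwindow⟩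
  · rw [div_mul_eq_mul_div]
    exact (div_le_div_of_nonneg_right hxN (by positivity)).trans (hs r hr).1

theorem statement16_general
    (c q L H D Q2 Q3 u : ℝ) (hc : 0 < c) (hq : 0 < q) (hL : 0 < L) (hH : 0 < H)
    (hqLH : q * L * H = 1)
    (m : ℕ) (hm : 1 ≤ m) (i₀ : ℤ)
    (t₀ ε : ℝ) (ht₀ : 0 < t₀) (hε : 0 < ε)
    (y₀ x₀ : ℝ)
    (hy₀ : y₀ = Real.sqrt (4 * c / (4 * D ^ 2 - 1)) * L)
    (Y₂ : ℝ) (hY₂ : Y₂ = t₀ * y₀)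
    (X₂ : ℕ → ℝ) (hX₂ : ∀ k : ℕ, X₂ k = t₀ * (x₀ + (k : ℝ) * q * y₀ / L))
    (Δ : ℕ → ℝ) (hΔ : ∀ k : ℕ, Δ k = Y₂ * ε / (X₂ k + ε))
    (rect : ℕ → Set (ℝ × ℝ))
    (hrect : ∀ k : ℕ, rect k = Set.Icc (X₂ k - ε) (X₂ k) ×ˢ Set.Icc (Y₂ - Δ k) Y₂)
    (hirr : Irrational (H ^ 2 * q * Y₂ / L)) :
    ∃ (K : ℕ → ℕ) (S I : ℕ → ℤ), StrictMono K ∧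
      (∀ j : ℕ, ∀ r : ℕ, r < m →
        ((((S j : ℝ) + (r : ℝ)) * q + ((i₀ : ℝ) + (m : ℝ) * (I j : ℝ)) * Q2 + Q3,
            ((i₀ : ℝ) + (m : ℝ) * (I j : ℝ)) * L + u) ∈
          f2p c q H '' rect (K j))) ∧
      (∀ r : ℕ, r < m →
        Tendsto
          (fun j : ℕ =>
            ((S j : ℝ) + (r : ℝ)) * q + ((i₀ : ℝ) + (m : ℝ) * (I j : ℝ)) * Q2)
          atTop atTop) := by
  have hY₂pos : 0 < Y₂ := by
    have h0 : 0 ≤ Y₂ := by rw [hY₂, hy₀]; positivity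
    exact h0.lt_of_ne fun h => hirr.ne_zero (by rw [← h]; ring)
  have hy₀pos : 0 < y₀ := pos_of_mul_pos_right (hY₂ ▸ hY₂pos) ht₀.le
  set α := t₀ * q * y₀ / L
  set P := q * m * L / H
  have hX₂α : X₂ = fun k : ℕ => t₀ * x₀ + k * α := funext fun k => by rw [hX₂]; ring
  have hX₂top : Tendsto X₂ atTop atTop := hX₂α ▸
    tendsto_atTop_add_const_left _ _ (tendsto_natCast_atTop_atTop.atTop_mul_const (by positivity))
  have hαP : Irrational (α / P) := by
    have : α / P = H ^ 2 * q * Y₂ / L / m := by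
      simp only [α, P, hY₂]
      field_simp
      linear_combination -hqLH
    exact this ▸ hirr.div_natCast (by omega)
  have hfreq : ∃ᶠ k : ℕ in atTop,
      ∃ i : ℤ, q * (i₀ * L + u) / H + i * P ∈ Icc (X₂ k - ε) (X₂ k) := by
    rw [hX₂α]
    exact hαP.frequently_exists_int_add_mul_mem_Icc _ _ (by positivity) hε
  have hlarge : ∀ᶠ k : ℕ in atTop, ε ≤ X₂ k ∧ m * q ^ 2 * Y₂ * X₂ k ≤ H * ε * (X₂ k - ε) ^ 2 :=
    hX₂top.eventually
      ((eventually_ge_atTop ε).and (eventually_mul_le_mul_sub_sq _ _ (by positivity)))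
  obtain ⟨K, hK, hKgood⟩ := extraction_of_frequently_atTop (hfreq.and_eventually hlarge)
  choose I hI using fun j => (hKgood j).1
  have hW : ∀ j, q * ((i₀ + m * I j) * L + u) / H ∈ Icc (X₂ (K j) - ε) (X₂ (K j)) := fun j => by
    convert hI j using 1
    simp only [P]
    ring
  choose S hS using fun j => exists_int_forall_mem_image_f2p (c₁ := (i₀ + m * I j) * Q2 + Q3) m
    hc hq hH hY₂pos hε (hKgood j).2.1 (hKgood j).2.2 (hW j)
  refine ⟨K, S, I, hK, fun j r hr => ?_, fun r hr => ?_⟩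
  · rw [hrect, hΔ, add_assoc _ _ Q3]
    exact (hS j r hr).1
  refine tendsto_atTop_mono (fun j => ?_) ((tendsto_const_mul_sub_sq_sub_atTop
    (by positivity : 0 < H / (q * Y₂)) ε Q3).comp (hX₂top.comp hK.tendsto_atTop))
  simp only [Function.comp_apply]
  linarith [(hS j r hr).2]

theorem statement16
    (c q L H D Q2 Q3 u : ℝ) (hc : 0 < c) (hq : 0 < q) (hL : 0 < L) (hH : 0 < H)
    (hD : 1 ≤ D) (hQ2 : 0 ≤ Q2) (hqLH : q * L * H = 1)
    (m : ℕ) (hm : 1 ≤ m) (i₀ : ℤ)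
    (t₀ ε : ℝ) (ht₀ : 0 < t₀) (ht₀' : t₀ < 1) (hε : 0 < ε)
    (y₀ x₀ : ℝ)
    (hy₀ : y₀ = Real.sqrt (4 * c / (4 * D ^ 2 - 1)) * L)
    (hx₀ : x₀ = Real.sqrt (4 * c / (4 * D ^ 2 - 1)) * (Q2 + q / 2))
    (Y₂ : ℝ) (hY₂ : Y₂ = t₀ * y₀)
    (X₂ : ℕ → ℝ) (hX₂ : ∀ k : ℕ, X₂ k = t₀ * (x₀ + (k : ℝ) * q * y₀ / L))
    (Δ : ℕ → ℝ) (hΔ : ∀ k : ℕ, Δ k = Y₂ * ε / (X₂ k + ε))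
    (rect : ℕ → Set (ℝ × ℝ))
    (hrect : ∀ k : ℕ, rect k = Set.Icc (X₂ k - ε) (X₂ k) ×ˢ Set.Icc (Y₂ - Δ k) Y₂)
    (hirr : Irrational (H ^ 2 * q * Y₂ / L)) :
    ∃ (K : ℕ → ℕ) (S I : ℕ → ℤ), StrictMono K ∧
      (∀ j : ℕ, ∀ r : ℕ, r < m →
        ((((S j : ℝ) + (r : ℝ)) * q + ((i₀ : ℝ) + (m : ℝ) * (I j : ℝ)) * Q2 + Q3,
            ((i₀ : ℝ) + (m : ℝ) * (I j : ℝ)) * L + u) ∈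
          f2p c q H '' rect (K j))) ∧
      (∀ r : ℕ, r < m →
        Tendsto
          (fun j : ℕ =>
            ((S j : ℝ) + (r : ℝ)) * q + ((i₀ : ℝ) + (m : ℝ) * (I j : ℝ)) * Q2)
          atTop atTop) :=
  statement16_general c q L H D Q2 Q3 u hc hq hL hH hqLH m hm i₀ t₀ ε ht₀ hε y₀ x₀ hy₀ Y₂ hY₂ X₂ hX₂
    Δ hΔ rect hrect hirr
end
end
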